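/- arXiv:1311.6783 — 3 statements merged into one kernel-verified Lean document; each statement's English description precedes it below -/
import Mathlib

section
/- Let p, q ∈ (0,1), let z ∈ ℂ with Im z > 0 and z ∉ {0, 1}, and define m_M(z) = (z + (p + q − 2) + √(z² − 2(p + q − 2pq)z + (p − q)²)) / (2z(1 − z)) (principal square root, with the branch chosen so that Im m_M(z) > 0). Then whenever z·m_M(z) ≠ 0 and z − (1 + (1−p)/(z·m_M(z))) ≠ 0, m_M satisfies the implicit equation m_M(z) = −(1−q)/z − q/(z − (1 + (1−p)/(z·m_M(z)))). -/
/-!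
Only algebra is involved: whichever square root is taken, `w = z m` is a root of the
quadratic `(w + 1 - q) (w (z - 1) - (1 - p)) + q z w = 0`, obtained by squaring
`2 z (1 - z) m - (z + p + q - 2) = √Δ`; clearing the denominators of the implicit
equation gives back exactly this quadratic.
-/

section ManovaAlgebra

variable {K : Type*} [Field K] {p q z m : K}

theorem manova_relation_of_sq_eq_discr [NeZero (2 : K)] (hz1 : z ≠ 1)
    (h : (2 * z * (1 - z) * m - (z + (p + q - 2))) ^ 2
      = z ^ 2 - 2 * (p + q - 2 * p * q) * z + (p - q) ^ 2) :
    (z * m + (1 - q)) * (z * m * (z - 1) - (1 - p)) + q * z ^ 2 * m = 0 := by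
  have h4 : (4 : K) * (1 - z) ≠ 0 :=
    mul_ne_zero (by simpa [show (4 : K) = 2 * 2 by norm_num] using NeZero.ne (2 : K))
      (sub_ne_zero.mpr hz1.symm)
  refine (mul_eq_zero.mp ?_).resolve_left h4
  linear_combination (-1 : K) * h

theorem eq_implicit_of_manova_relation (hzm : z * m ≠ 0)
    (hden : z - (1 + (1 - p) / (z * m)) ≠ 0)
    (h : (z * m + (1 - q)) * (z * m * (z - 1) - (1 - p)) + q * z ^ 2 * m = 0) :
    m = -(1 - q) / z - q / (z - (1 + (1 - p) / (z * m))) := by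
  have hz0 : z ≠ 0 := left_ne_zero_of_mul hzm
  have hm0 : m ≠ 0 := right_ne_zero_of_mul hzm
  have hden_eq : z - (1 + (1 - p) / (z * m)) = (z * m * (z - 1) - (1 - p)) / (z * m) := by
    field_simp
    ring
  have hnum : z * m * (z - 1) - (1 - p) ≠ 0 := by
    rw [hden_eq] at hden
    exact (div_ne_zero_iff.mp hden).1
  rw [hden_eq, div_div_eq_mul_div]
  set D := z * m * (z - 1) - (1 - p)
  field_simp
  linear_combination h

end ManovaAlgebra

theorem mM_satisfies_implicit_equation_general (p q : ℝ)
    (z : ℂ) (hz0 : z ≠ 0) (hz1 : z ≠ 1)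
    (m : ℂ)
    (hm : m = (z + ((p : ℂ) + q - 2) +
        (z ^ 2 - 2 * ((p : ℂ) + q - 2 * p * q) * z + ((p : ℂ) - q) ^ 2) ^ ((1 : ℂ) / 2)) /
        (2 * z * (1 - z)))
    (hzm : z * m ≠ 0)
    (hden : z - (1 + (1 - (p : ℂ)) / (z * m)) ≠ 0) :
    m = -(1 - (q : ℂ)) / z - (q : ℂ) / (z - (1 + (1 - (p : ℂ)) / (z * m))) := by
  set Δ := z ^ 2 - 2 * ((p : ℂ) + q - 2 * p * q) * z + ((p : ℂ) - q) ^ 2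
  have hsq : (Δ ^ ((1 : ℂ) / 2)) ^ 2 = Δ := by
    rw [one_div]; exact_mod_cast Complex.cpow_nat_inv_pow Δ two_ne_zero
  have hlin : 2 * z * (1 - z) * m - (z + ((p : ℂ) + q - 2)) = Δ ^ ((1 : ℂ) / 2) := by
    have : (2 : ℂ) * z * (1 - z) ≠ 0 :=
      mul_ne_zero (mul_ne_zero two_ne_zero hz0) (sub_ne_zero.mpr hz1.symm)
    rw [hm]
    field_simp
    ring
  refine eq_implicit_of_manova_relation hzm hden (manova_relation_of_sq_eq_discr hz1 ?_)
  rw [hlin, hsq]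

/-- The Stieltjes transform `m_M` of the MANOVA distribution satisfies the
self-consistent equation `m = −(1−q)/z − q/(z − (1 + (1−p)/(z m)))`. -/
theorem mM_satisfies_implicit_equation (p q : ℝ)
    (hp : p ∈ Set.Ioo (0 : ℝ) 1) (hq : q ∈ Set.Ioo (0 : ℝ) 1)
    (z : ℂ) (hz : 0 < z.im) (hz0 : z ≠ 0) (hz1 : z ≠ 1)
    (m : ℂ)
    (hm : m = (z + ((p : ℂ) + q - 2) +
        (z ^ 2 - 2 * ((p : ℂ) + q - 2 * p * q) * z + ((p : ℂ) - q) ^ 2) ^ ((1 : ℂ) / 2)) /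
        (2 * z * (1 - z)))
    (hmim : 0 < m.im)
    (hzm : z * m ≠ 0)
    (hden : z - (1 + (1 - (p : ℂ)) / (z * m)) ≠ 0) :
    m = -(1 - (q : ℂ)) / z - (q : ℂ) / (z - (1 + (1 - (p : ℂ)) / (z * m))) :=
  mM_satisfies_implicit_equation_general p q z hz0 hz1 m hm hzm hden
end

section
/- Let P, Q be N×N diagonal 0–1 projections, W an N×N unitary with columns w₁,…,w_N, z ∈ ℂ with Im z > 0, R(z) = (PWQW*P − zI)⁻¹, and for each j let R_j(z) = (Σ_{k≠j} Q_{kk} P w_k w_k* P − zI)⁻¹. Then for every j with Q_{jj} = 1: w_j* P R(z) P w_j = (w_j* P R_j(z) P w_j)/(1 + w_j* P R_j(z) P w_j), and moreover (1/N)·tr(R(z)) = −(1/z)·(1/N)·Σ_{j=1}^{N} 1/(1 + Q_{jj}·w_j* P R_j(z) P w_j). -/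
open Matrix

namespace RankOneAux

variable {n : Type*} [Fintype n] [DecidableEq n]

lemma vecMulVec_mulVec' (a b x : n → ℂ) :
    vecMulVec a b *ᵥ x = (b ⬝ᵥ x) • a := by
  ext i
  simp only [mulVec, dotProduct, vecMulVec_apply, Pi.smul_apply, smul_eq_mul, Finset.sum_mul]
  exact Finset.sum_congr rfl fun k _ => by ring

lemma trace_vecMulVec_mul (a b : n → ℂ) (M : Matrix n n ℂ) :
    trace (vecMulVec a b * M) = b ⬝ᵥ M *ᵥ a := by
  simp only [trace, diag, Matrix.mul_apply, vecMulVec_apply, dotProduct, mulVec, Finset.mul_sum]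
  rw [Finset.sum_comm]
  exact Finset.sum_congr rfl fun k _ => Finset.sum_congr rfl fun i _ => by ring

lemma quadform_star (M : Matrix n n ℂ) (v : n → ℂ) :
    star (star v ⬝ᵥ M *ᵥ v) = star v ⬝ᵥ Mᴴ *ᵥ v := by
  simp only [dotProduct, mulVec, conjTranspose_apply, star_sum, star_mul', star_star,
    Finset.mul_sum]
  rw [Finset.sum_comm]
  exact Finset.sum_congr rfl fun k _ => Finset.sum_congr rfl fun i _ => by
    simp only [Pi.star_apply, RCLike.star_def, Complex.conj_conj]
    ring

lemma herm_isUnit_det (H : Matrix n n ℂ) (hH : Hᴴ = H) {z : ℂ} (hz : z.im ≠ 0) :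
    IsUnit (H - z • (1 : Matrix n n ℂ)).det := by
  rw [isUnit_iff_ne_zero]
  intro hdet
  obtain ⟨v, hv0, hv⟩ := (Matrix.exists_mulVec_eq_zero_iff).mpr hdet
  have hHv : H *ᵥ v = z • v := by
    have := hv
    rw [sub_mulVec, smul_mulVec, one_mulVec, sub_eq_zero] at this
    exact this
  set q := star v ⬝ᵥ H *ᵥ v with hq
  have hqreal : star q = q := by
    rw [hq, quadform_star, hH]
  have hqv : q = z * (star v ⬝ᵥ v) := by
    rw [hq, hHv, dotProduct_smul, smul_eq_mul]
  have hvv : star v ⬝ᵥ v = ((∑ i, Complex.normSq (v i) : ℝ) : ℂ) := by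
    push_cast
    simp only [dotProduct, Pi.star_apply, RCLike.star_def]
    exact Finset.sum_congr rfl fun i _ => (Complex.normSq_eq_conj_mul_self (z := v i)).symm
  set c : ℝ := ∑ i, Complex.normSq (v i) with hc
  have hcpos : 0 < c := by
    obtain ⟨i, hi⟩ := Function.ne_iff.mp hv0
    refine Finset.sum_pos' (fun i _ => Complex.normSq_nonneg _) ⟨i, Finset.mem_univ i, ?_⟩
    exact Complex.normSq_pos.mpr hi
  have him : q.im = 0 := by
    have := congrArg Complex.im hqreal
    simp only [Complex.conj_im, RCLike.star_def] at this
    linarith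
  have him2 : q.im = z.im * c := by
    rw [hqv, hvv]
    simp [Complex.mul_im]
  rw [him2] at him
  rcases mul_eq_zero.mp him with h | h
  · exact hz h
  · exact hcpos.ne' h

lemma one_add_quad_ne_zero (H : Matrix n n ℂ) (hH : Hᴴ = H) {z : ℂ} (hz : z.im ≠ 0)
    (v : n → ℂ) :
    1 + star v ⬝ᵥ (H - z • (1 : Matrix n n ℂ))⁻¹ *ᵥ v ≠ 0 := by
  set M := H - z • (1 : Matrix n n ℂ) with hM
  have hdet : IsUnit M.det := herm_isUnit_det H hH hz
  have hMH : Mᴴ = H - star z • (1 : Matrix n n ℂ) := by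
    rw [hM, conjTranspose_sub, conjTranspose_smul, conjTranspose_one, hH]
  have hdetH : IsUnit Mᴴ.det := by
    rw [Matrix.det_conjTranspose]
    exact hdet.star
  set y := Mᴴ⁻¹ *ᵥ v with hy
  have hvy : Mᴴ *ᵥ y = v := by
    rw [hy, mulVec_mulVec, mul_nonsing_inv _ hdetH, one_mulVec]
  set s := star v ⬝ᵥ M⁻¹ *ᵥ v with hs
  have hstar : star s = star v ⬝ᵥ Mᴴ⁻¹ *ᵥ v := by
    rw [hs, quadform_star, conjTranspose_nonsing_inv]
  have hsub : Mᴴ - M = (z - star z) • (1 : Matrix n n ℂ) := by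
    rw [hMH, hM, sub_smul]
    abel
  have h1 : M⁻¹ - Mᴴ⁻¹ = (z - star z) • (M⁻¹ * Mᴴ⁻¹) := by
    have h2 : M⁻¹ * (Mᴴ - M) * Mᴴ⁻¹ = M⁻¹ - Mᴴ⁻¹ := by
      rw [Matrix.mul_sub, Matrix.sub_mul, Matrix.mul_assoc M⁻¹ Mᴴ Mᴴ⁻¹,
        mul_nonsing_inv _ hdetH, nonsing_inv_mul _ hdet, Matrix.mul_one, Matrix.one_mul]
    rw [← h2, hsub]
    rw [Matrix.mul_smul, Matrix.smul_mul, Matrix.mul_one]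
  have hsvy : star v ᵥ* M⁻¹ = star y := by
    rw [hy, star_mulVec, conjTranspose_nonsing_inv, conjTranspose_conjTranspose]
  have hdiff : s - star s = (z - star z) * (star y ⬝ᵥ y) := by
    rw [hstar, hs, ← dotProduct_sub, ← sub_mulVec, h1, smul_mulVec, dotProduct_smul,
      smul_eq_mul, ← mulVec_mulVec, dotProduct_mulVec, hsvy]
  have hyy : star y ⬝ᵥ y = ((∑ i, Complex.normSq (y i) : ℝ) : ℂ) := by
    push_cast
    simp only [dotProduct, Pi.star_apply, RCLike.star_def]
    exact Finset.sum_congr rfl fun i _ => (Complex.normSq_eq_conj_mul_self (z := y i)).symm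
  set c : ℝ := ∑ i, Complex.normSq (y i) with hc
  have hcnn : 0 ≤ c := Finset.sum_nonneg fun i _ => Complex.normSq_nonneg _
  rcases eq_or_lt_of_le hcnn with hc0 | hcpos
  · have hy0 : y = 0 := by
      funext i
      have := (Finset.sum_eq_zero_iff_of_nonneg
        (fun i _ => Complex.normSq_nonneg (y i))).mp hc0.symm i (Finset.mem_univ i)
      simpa [Complex.normSq_eq_zero] using this
    have hv0 : v = 0 := by rw [← hvy, hy0, mulVec_zero]
    have hs0 : s = 0 := by rw [hs, hv0]; simp
    rw [hs0]
    simp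
  · have him : s.im = z.im * c := by
      have := congrArg Complex.im hdiff
      rw [hyy] at this
      simp only [Complex.sub_im, Complex.conj_im, RCLike.star_def, Complex.mul_im,
        Complex.ofReal_re, Complex.ofReal_im, Complex.sub_re, mul_zero, add_zero,
        sub_neg_eq_add] at this
      nlinarith [this]
    intro hcon
    have h0 : (1 + s).im = 0 := by rw [hcon]; simp
    rw [Complex.add_im, Complex.one_im, him] at h0
    rcases mul_eq_zero.mp (by linarith : z.im * c = 0) with h | h
    · exact hz h
    · exact hcpos.ne' h

lemma scalar_step (t s : ℂ) (hs : 1 + s ≠ 0) (h : t * (1 + s) = s) : t = 1 - (1 + s)⁻¹ := by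
  field_simp
  linear_combination h

lemma scalar_final (z T S c : ℂ) (hz : z ≠ 0) (h : z * T = -S) :
    c * T = -(1 / z) * (c * S) := by
  field_simp
  linear_combination c * h

end RankOneAux

open RankOneAux in
/-- Rank-one removal identities: for diagonal 0–1 projections `P, Q`, a unitary `W`
with columns `w_j`, `R(z) = (PWQWᴴP − zI)⁻¹`, and
`R_j(z) = (Σ_{k≠j} Q_{kk} P w_k w_kᴴ P − zI)⁻¹`, one has for every `j` with
`Q_{jj} = 1` that `w_jᴴ P R P w_j = (w_jᴴ P R_j P w_j)/(1 + w_jᴴ P R_j P w_j)`,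
and `(1/N) tr R = −(1/z)(1/N) Σ_j 1/(1 + Q_{jj} w_jᴴ P R_j P w_j)`. -/
theorem rank_one_removal_identities {N : ℕ} (P Q W : Matrix (Fin N) (Fin N) ℂ)
    (hPdiag : ∀ i j, i ≠ j → P i j = 0) (hP01 : ∀ i, P i i = 0 ∨ P i i = 1)
    (hQdiag : ∀ i j, i ≠ j → Q i j = 0) (hQ01 : ∀ i, Q i i = 0 ∨ Q i i = 1)
    (hW : W ∈ Matrix.unitaryGroup (Fin N) ℂ)
    (z : ℂ) (hz : 0 < z.im)
    (w : Fin N → Fin N → ℂ) (hw : ∀ j i, w j i = W i j)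
    (R : Matrix (Fin N) (Fin N) ℂ)
    (hR : R = (P * W * Q * Wᴴ * P - z • (1 : Matrix (Fin N) (Fin N) ℂ))⁻¹)
    (Rj : Fin N → Matrix (Fin N) (Fin N) ℂ)
    (hRj : ∀ j, Rj j =
      ((∑ k ∈ Finset.univ.erase j,
          Q k k • vecMulVec (P *ᵥ w k) (star (P *ᵥ w k))) -
        z • (1 : Matrix (Fin N) (Fin N) ℂ))⁻¹) :
    (∀ j, Q j j = 1 →
        star (w j) ⬝ᵥ (P * R * P) *ᵥ w j =
          (star (w j) ⬝ᵥ (P * Rj j * P) *ᵥ w j) /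
            (1 + star (w j) ⬝ᵥ (P * Rj j * P) *ᵥ w j)) ∧
      (N : ℂ)⁻¹ * Matrix.trace R =
        -(1 / z) * ((N : ℂ)⁻¹ *
          ∑ j, (1 + Q j j * (star (w j) ⬝ᵥ (P * Rj j * P) *ᵥ w j))⁻¹) := by
  classical
  have hzim : z.im ≠ 0 := ne_of_gt hz
  have hzne : z ≠ 0 := fun h => hzim (by rw [h]; simp)
  have hPstar : ∀ i, star (P i i) = P i i := fun i => by rcases hP01 i with h | h <;> simp [h]
  have hQstar : ∀ i, star (Q i i) = Q i i := fun i => by rcases hQ01 i with h | h <;> simp [h]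
  have hPH : Pᴴ = P := by
    ext a b
    by_cases h : b = a
    · subst h; simpa [conjTranspose_apply] using hPstar b
    · simp [conjTranspose_apply, hPdiag b a h, hPdiag a b fun h' => h h'.symm]
  have hPd : P = diagonal fun i => P i i := by
    ext a b
    by_cases h : a = b
    · subst h; simp
    · simp [Matrix.diagonal_apply_ne _ h, hPdiag a b h]
  have hQd : Q = diagonal fun i => Q i i := by
    ext a b
    by_cases h : a = b
    · subst h; simp
    · simp [Matrix.diagonal_apply_ne _ h, hQdiag a b h]
  have hval : ∀ k i, (P *ᵥ w k) i = P i i * W i k := by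
    intro k i
    conv_lhs => rw [hPd]
    rw [mulVec_diagonal, hw]
  have hA : P * W * Q * Wᴴ * P
      = ∑ k, Q k k • vecMulVec (P *ᵥ w k) (star (P *ᵥ w k)) := by
    ext a b
    rw [Matrix.sum_apply]
    conv_lhs => rw [hPd, hQd]
    rw [Matrix.mul_diagonal, Matrix.mul_apply, Finset.sum_mul]
    refine Finset.sum_congr rfl fun k _ => ?_
    simp only [Matrix.mul_diagonal, Matrix.diagonal_mul, conjTranspose_apply,
      Matrix.smul_apply, vecMulVec_apply, smul_eq_mul, Pi.star_apply, hval, star_mul',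
      hPstar]
    ring
  have hVH : ∀ (u : Fin N → ℂ), (vecMulVec u (star u))ᴴ = vecMulVec u (star u) := by
    intro u
    ext a b
    simp [conjTranspose_apply, vecMulVec_apply, mul_comm]
  have hAH : (P * W * Q * Wᴴ * P)ᴴ = P * W * Q * Wᴴ * P := by
    rw [hA, Matrix.conjTranspose_sum]
    refine Finset.sum_congr rfl fun k _ => ?_
    rw [Matrix.conjTranspose_smul, hVH, hQstar]
  have hAjH : ∀ j, (∑ k ∈ Finset.univ.erase j,
      Q k k • vecMulVec (P *ᵥ w k) (star (P *ᵥ w k)))ᴴ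
      = ∑ k ∈ Finset.univ.erase j, Q k k • vecMulVec (P *ᵥ w k) (star (P *ᵥ w k)) := by
    intro j
    rw [Matrix.conjTranspose_sum]
    refine Finset.sum_congr rfl fun k _ => ?_
    rw [Matrix.conjTranspose_smul, hVH, hQstar]
  have hdetB : IsUnit (P * W * Q * Wᴴ * P - z • (1 : Matrix (Fin N) (Fin N) ℂ)).det :=
    herm_isUnit_det _ hAH hzim
  have hdetBj : ∀ j, IsUnit ((∑ k ∈ Finset.univ.erase j,
      Q k k • vecMulVec (P *ᵥ w k) (star (P *ᵥ w k))) -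
        z • (1 : Matrix (Fin N) (Fin N) ℂ)).det :=
    fun j => herm_isUnit_det _ (hAjH j) hzim
  -- quadratic form translation
  have hquad : ∀ (j : Fin N) (M : Matrix (Fin N) (Fin N) ℂ),
      star (w j) ⬝ᵥ (P * M * P) *ᵥ w j = star (P *ᵥ w j) ⬝ᵥ M *ᵥ (P *ᵥ w j) := by
    intro j M
    rw [← mulVec_mulVec, ← mulVec_mulVec, dotProduct_mulVec]
    congr 1
    rw [star_mulVec, hPH]
  -- 1 + s_j ≠ 0
  have hs_ne : ∀ j, 1 + star (P *ᵥ w j) ⬝ᵥ Rj j *ᵥ (P *ᵥ w j) ≠ 0 := by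
    intro j
    rw [hRj j]
    exact one_add_quad_ne_zero _ (hAjH j) hzim _
  -- key identity
  have hkey : ∀ j, Q j j = 1 →
      (star (P *ᵥ w j) ⬝ᵥ R *ᵥ (P *ᵥ w j)) *
        (1 + star (P *ᵥ w j) ⬝ᵥ Rj j *ᵥ (P *ᵥ w j))
      = star (P *ᵥ w j) ⬝ᵥ Rj j *ᵥ (P *ᵥ w j) := by
    intro j hQj
    have hBu : (P * W * Q * Wᴴ * P - z • (1 : Matrix (Fin N) (Fin N) ℂ)) *ᵥ
        (R *ᵥ (P *ᵥ w j)) = P *ᵥ w j := by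
      rw [mulVec_mulVec, hR, mul_nonsing_inv _ hdetB, one_mulVec]
    have hsplit : P * W * Q * Wᴴ * P
        = (∑ k ∈ Finset.univ.erase j, Q k k • vecMulVec (P *ᵥ w k) (star (P *ᵥ w k)))
          + vecMulVec (P *ᵥ w j) (star (P *ᵥ w j)) := by
      rw [hA, ← Finset.add_sum_erase _ _ (Finset.mem_univ j), hQj, one_smul]
      abel
    have hBju : ((∑ k ∈ Finset.univ.erase j,
        Q k k • vecMulVec (P *ᵥ w k) (star (P *ᵥ w k))) -
          z • (1 : Matrix (Fin N) (Fin N) ℂ)) *ᵥ (R *ᵥ (P *ᵥ w j))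
        = (1 - star (P *ᵥ w j) ⬝ᵥ (R *ᵥ (P *ᵥ w j))) • (P *ᵥ w j) := by
      have h1 : (P * W * Q * Wᴴ * P - z • (1 : Matrix (Fin N) (Fin N) ℂ))
          = ((∑ k ∈ Finset.univ.erase j,
              Q k k • vecMulVec (P *ᵥ w k) (star (P *ᵥ w k))) -
            z • (1 : Matrix (Fin N) (Fin N) ℂ))
            + vecMulVec (P *ᵥ w j) (star (P *ᵥ w j)) := by
        rw [hsplit]; abel
      rw [h1, add_mulVec, vecMulVec_mulVec'] at hBu
      rw [sub_smul, one_smul]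
      exact eq_sub_of_add_eq hBu
    have hu2 : R *ᵥ (P *ᵥ w j)
        = (1 - star (P *ᵥ w j) ⬝ᵥ (R *ᵥ (P *ᵥ w j))) • (Rj j *ᵥ (P *ᵥ w j)) := by
      have hone : Rj j * ((∑ k ∈ Finset.univ.erase j,
          Q k k • vecMulVec (P *ᵥ w k) (star (P *ᵥ w k))) -
            z • (1 : Matrix (Fin N) (Fin N) ℂ)) = 1 := by
        rw [hRj j]
        exact nonsing_inv_mul _ (hdetBj j)
      have h2 : R *ᵥ (P *ᵥ w j) = Rj j *ᵥ
          (((∑ k ∈ Finset.univ.erase j,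
            Q k k • vecMulVec (P *ᵥ w k) (star (P *ᵥ w k))) -
              z • (1 : Matrix (Fin N) (Fin N) ℂ)) *ᵥ (R *ᵥ (P *ᵥ w j))) := by
        conv_rhs => rw [mulVec_mulVec, hone, one_mulVec]
      conv_lhs => rw [h2, hBju, mulVec_smul]
    have ht : star (P *ᵥ w j) ⬝ᵥ R *ᵥ (P *ᵥ w j)
        = (1 - star (P *ᵥ w j) ⬝ᵥ (R *ᵥ (P *ᵥ w j))) *
          (star (P *ᵥ w j) ⬝ᵥ Rj j *ᵥ (P *ᵥ w j)) := by
      conv_lhs => rw [hu2]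
      rw [dotProduct_smul, smul_eq_mul]
    linear_combination ht
  refine ⟨?_, ?_⟩
  · intro j hQj
    rw [hquad j R, hquad j (Rj j), eq_div_iff (hs_ne j)]
    exact hkey j hQj
  · -- trace identity
    have htr1 : Matrix.trace ((P * W * Q * Wᴴ * P - z • (1 : Matrix (Fin N) (Fin N) ℂ)) * R)
        = (N : ℂ) := by
      rw [hR, mul_nonsing_inv _ hdetB, Matrix.trace_one]
      simp
    have htr2 : Matrix.trace ((P * W * Q * Wᴴ * P) * R)
        = ∑ j, Q j j * (star (P *ᵥ w j) ⬝ᵥ R *ᵥ (P *ᵥ w j)) := by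
      rw [hA, Finset.sum_mul, Matrix.trace_sum]
      refine Finset.sum_congr rfl fun k _ => ?_
      rw [Matrix.smul_mul, Matrix.trace_smul, trace_vecMulVec_mul, smul_eq_mul]
    have hterm : ∀ j, Q j j * (star (P *ᵥ w j) ⬝ᵥ R *ᵥ (P *ᵥ w j))
        = 1 - (1 + Q j j * (star (P *ᵥ w j) ⬝ᵥ Rj j *ᵥ (P *ᵥ w j)))⁻¹ := by
      intro j
      rcases hQ01 j with h | h
      · simp [h]
      · rw [h, one_mul, one_mul]
        exact scalar_step _ _ (hs_ne j) (hkey j h)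
    have hzR : z * Matrix.trace R
        = -∑ j, (1 + Q j j * (star (P *ᵥ w j) ⬝ᵥ Rj j *ᵥ (P *ᵥ w j)))⁻¹ := by
      have h3 : Matrix.trace ((P * W * Q * Wᴴ * P) * R) - z * Matrix.trace R = (N : ℂ) := by
        rw [← htr1, Matrix.sub_mul, Matrix.smul_mul, Matrix.one_mul, Matrix.trace_sub,
          Matrix.trace_smul, smul_eq_mul]
      rw [htr2] at h3
      have h4 : ∑ j, Q j j * (star (P *ᵥ w j) ⬝ᵥ R *ᵥ (P *ᵥ w j))
          = (N : ℂ) - ∑ j, (1 + Q j j * (star (P *ᵥ w j) ⬝ᵥ Rj j *ᵥ (P *ᵥ w j)))⁻¹ := by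
        rw [Finset.sum_congr rfl fun j _ => hterm j, Finset.sum_sub_distrib]
        simp [Finset.card_univ]
      rw [h4] at h3
      linear_combination -h3
    simp only [hquad]
    exact scalar_final z _ _ _ hzne hzR
end

section
/- Let p, q ∈ (0,1) with p + q ≤ 1 and p ≤ q, and let λ_± = p + q − 2pq ± 2√(pq(1−p)(1−q)). Then ∫_{λ_−}^{λ_+} √((λ_+ − x)(x − λ_−)) / (2π x(1−x)) dx = p, so that f_M(x)dx = (1−p)δ₀ + (√((λ_+−x)(x−λ_−))/(2πx(1−x)))·1_{[λ_−,λ_+]}(x)dx is a probability measure. -/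
/-!
Since `(b - x) (x - a) = x (1 - x) - a b (1 - x) - (1 - a) (1 - b) x`, the integrand is
`(1 / √S - a b / (x √S) - (1 - a) (1 - b) / ((1 - x) √S)) / 2π` with `S = (b - x) (x - a)`.
The first term has the primitive `arcsin ((2x - a - b) / (b - a))`, the second reduces to it
under `t = a b / x`, the third under the reflection `x ↦ 1 - x`. Evaluating at the endpoints,
the integral over `[a, b]` is `(1 - √(a b) - √((1 - a) (1 - b))) / 2` whenever `0 ≤ a < b ≤ 1`.
At the MANOVA edges `a b = (q - p)²` and `(1 - a) (1 - b) = (1 - p - q)²`, which yields `p`.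
-/

open Real Set intervalIntegral

noncomputable def intervalArcsin (a b x : ℝ) : ℝ :=
  arcsin ((2 * x - a - b) / (b - a))

section

variable {a b x : ℝ}

lemma intervalArcsin_left (hab : a < b) : intervalArcsin a b a = -(π / 2) := by
  rw [intervalArcsin, show 2 * a - a - b = -(b - a) by ring, neg_div,
    div_self (sub_pos.2 hab).ne', arcsin_neg_one]

lemma intervalArcsin_right (hab : a < b) : intervalArcsin a b b = π / 2 := by
  rw [intervalArcsin, show 2 * b - a - b = b - a by ring, div_self (sub_pos.2 hab).ne',
    arcsin_one]

lemma continuous_intervalArcsin : Continuous (intervalArcsin a b) :=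
  continuous_arcsin.comp (by fun_prop)

lemma hasDerivAt_intervalArcsin (hx : x ∈ Ioo a b) :
    HasDerivAt (intervalArcsin a b) (1 / √((b - x) * (x - a))) x := by
  obtain ⟨hax, hxb⟩ := hx
  have hba : 0 < b - a := by linarith
  have hu1 : (2 * x - a - b) / (b - a) < 1 := by rw [div_lt_one hba]; linarith
  have hu2 : -1 < (2 * x - a - b) / (b - a) := by rw [lt_div_iff₀ hba]; linarith
  have hinner : HasDerivAt (fun y => (2 * y - a - b) / (b - a)) (2 / (b - a)) x := by
    simpa using ((((hasDerivAt_id x).const_mul 2).sub_const a).sub_const b).div_const (b - a)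
  have hsqrt : √(1 - ((2 * x - a - b) / (b - a)) ^ 2) = 2 / (b - a) * √((b - x) * (x - a)) := by
    rw [← sqrt_sq (by positivity : 0 ≤ 2 / (b - a)), ← sqrt_mul (by positivity)]
    congr 1
    field_simp
    ring
  refine ((hasDerivAt_arcsin hu2.ne' hu1.ne).comp x hinner).congr_deriv ?_
  rw [hsqrt]
  have : 0 < √((b - x) * (x - a)) := sqrt_pos.2 (by nlinarith)
  field_simp

end

/-- The substitution `t = a b / x` maps `(a, b)` onto itself, turning a primitive of
`1 / √((b - t) (t - a))` into one of `-(a b) / (x √((b - x) (x - a)))`. -/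
noncomputable def recipArcsin (a b x : ℝ) : ℝ :=
  √(a * b) * intervalArcsin a b (a * b / x)

section

variable {a b x : ℝ}

lemma recipArcsin_zero_left : recipArcsin 0 b = 0 := by
  funext x
  simp [recipArcsin]

lemma recipArcsin_left (ha : 0 ≤ a) (hab : a < b) : recipArcsin a b a = √(a * b) * (π / 2) := by
  rcases ha.eq_or_lt with rfl | ha
  · simp [recipArcsin_zero_left]
  · rw [recipArcsin, mul_div_cancel_left₀ b ha.ne', intervalArcsin_right hab]

lemma recipArcsin_right (ha : 0 ≤ a) (hab : a < b) :
    recipArcsin a b b = -(√(a * b) * (π / 2)) := by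
  rcases ha.eq_or_lt with rfl | ha
  · simp [recipArcsin_zero_left]
  · rw [recipArcsin, mul_div_cancel_right₀ a (ha.trans hab).ne', intervalArcsin_left hab,
      mul_neg]

lemma continuousOn_recipArcsin (ha : 0 ≤ a) : ContinuousOn (recipArcsin a b) (Icc a b) := by
  rcases ha.eq_or_lt with rfl | ha
  · rw [recipArcsin_zero_left]
    exact continuousOn_const
  · refine continuousOn_const.mul (continuous_intervalArcsin.comp_continuousOn ?_)
    exact continuousOn_const.div continuousOn_id fun y hy => (ha.trans_le hy.1).ne'

lemma hasDerivAt_recipArcsin (ha : 0 ≤ a) (hx : x ∈ Ioo a b) :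
    HasDerivAt (recipArcsin a b) (-(a * b) / (x * √((b - x) * (x - a)))) x := by
  rcases ha.eq_or_lt with rfl | ha
  · simp [recipArcsin_zero_left]
  obtain ⟨hax, hxb⟩ := hx
  have hx0 : 0 < x := ha.trans hax
  have hb0 : 0 < b := ha.trans (hax.trans hxb)
  have hS : 0 < √((b - x) * (x - a)) := sqrt_pos.2 (by nlinarith)
  have ht : a * b / x ∈ Ioo a b := by
    constructor
    · rw [lt_div_iff₀ hx0]; nlinarith
    · rw [div_lt_iff₀ hx0]; nlinarith
  have hsub : √((b - a * b / x) * (a * b / x - a)) = √(a * b) * √((b - x) * (x - a)) / x := by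
    rw [← sqrt_sq (by positivity : 0 ≤ √(a * b) * √((b - x) * (x - a)) / x), div_pow, mul_pow,
      sq_sqrt (by positivity), sq_sqrt (by nlinarith)]
    congr 1
    field_simp
  have hrecip : HasDerivAt (fun y => a * b / y) (-(a * b) / x ^ 2) x := by
    simpa [div_eq_mul_inv, neg_div] using (hasDerivAt_inv hx0.ne').const_mul (a * b)
  refine (((hasDerivAt_intervalArcsin ht).comp x hrecip).const_mul √(a * b)).congr_deriv ?_
  rw [hsub]
  have : 0 < √(a * b) := sqrt_pos.2 (by positivity)
  field_simp

end

noncomputable def wachterPrimitive (a b x : ℝ) : ℝ :=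
  (intervalArcsin a b x + recipArcsin a b x - recipArcsin (1 - b) (1 - a) (1 - x)) / (2 * π)

section

variable {a b x : ℝ}

lemma continuousOn_wachterPrimitive (ha : 0 ≤ a) (hb : b ≤ 1) :
    ContinuousOn (wachterPrimitive a b) (Icc a b) := by
  have hreflect : MapsTo (fun y => 1 - y) (Icc a b) (Icc (1 - b) (1 - a)) :=
    fun y hy => ⟨by linarith [hy.2], by linarith [hy.1]⟩
  refine ContinuousOn.div_const (ContinuousOn.sub ?_ ?_) _
  · exact continuous_intervalArcsin.continuousOn.add (continuousOn_recipArcsin ha)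
  · exact (continuousOn_recipArcsin (sub_nonneg.2 hb)).comp (by fun_prop) hreflect

lemma hasDerivAt_wachterPrimitive (ha : 0 ≤ a) (hb : b ≤ 1) (hx : x ∈ Ioo a b) :
    HasDerivAt (wachterPrimitive a b) (√((b - x) * (x - a)) / (2 * π * x * (1 - x))) x := by
  obtain ⟨hax, hxb⟩ := hx
  have hx0 : 0 < x := ha.trans_lt hax
  have hx1 : 0 < 1 - x := by linarith
  have hS : 0 < (b - x) * (x - a) := by nlinarith
  have hreflect : HasDerivAt (fun y => recipArcsin (1 - b) (1 - a) (1 - y))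
      ((1 - a) * (1 - b) / ((1 - x) * √((b - x) * (x - a)))) x := by
    have h := (hasDerivAt_recipArcsin (a := 1 - b) (b := 1 - a) (x := 1 - x) (sub_nonneg.2 hb)
      ⟨by linarith, by linarith⟩).comp x ((hasDerivAt_id x).const_sub 1)
    refine h.congr_deriv ?_
    rw [show (1 - a - (1 - x)) * (1 - x - (1 - b)) = (b - x) * (x - a) by ring]
    ring
  refine ((((hasDerivAt_intervalArcsin ⟨hax, hxb⟩).add
    (hasDerivAt_recipArcsin ha ⟨hax, hxb⟩)).sub hreflect).div_const (2 * π)).congr_deriv ?_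
  have : 0 < √((b - x) * (x - a)) := sqrt_pos.2 hS
  field_simp
  linear_combination -sq_sqrt hS.le

lemma wachterPrimitive_right_sub_left (ha : 0 ≤ a) (hab : a < b) (hb : b ≤ 1) :
    wachterPrimitive a b b - wachterPrimitive a b a =
      (1 - √(a * b) - √((1 - a) * (1 - b))) / 2 := by
  have hab' : 1 - b < 1 - a := by linarith
  have hb' : 0 ≤ 1 - b := by linarith
  rw [wachterPrimitive, wachterPrimitive, intervalArcsin_left hab, intervalArcsin_right hab,
    recipArcsin_left ha hab, recipArcsin_right ha hab, recipArcsin_left hb' hab',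
    recipArcsin_right hb' hab', mul_comm (1 - b)]
  field_simp
  ring

theorem integral_sqrt_div_mul_one_sub (ha : 0 ≤ a) (hab : a < b) (hb : b ≤ 1) :
    ∫ x in a..b, √((b - x) * (x - a)) / (2 * π * x * (1 - x)) =
      (1 - √(a * b) - √((1 - a) * (1 - b))) / 2 := by
  have hcont := continuousOn_wachterPrimitive ha hb
  have hderiv := fun x hx => hasDerivAt_wachterPrimitive ha hb (x := x) hx
  have hnonneg : ∀ x ∈ Ioo a b, 0 ≤ √((b - x) * (x - a)) / (2 * π * x * (1 - x)) :=
    fun x hx => div_nonneg (sqrt_nonneg _)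
      (mul_nonneg (by nlinarith [hx.1, pi_pos]) (by linarith [hx.2]))
  have hint : IntervalIntegrable (fun x => √((b - x) * (x - a)) / (2 * π * x * (1 - x)))
      MeasureTheory.volume a b :=
    (intervalIntegrable_iff_integrableOn_Ioc_of_le hab.le).2
      (integrableOn_deriv_of_nonneg hcont hderiv hnonneg)
  rw [integral_eq_sub_of_hasDerivAt_of_le hab.le hcont hderiv hint,
    wachterPrimitive_right_sub_left ha hab hb]

end

/-- The absolutely continuous part of the MANOVA density integrates to `p` when
`p ≤ q` and `p + q ≤ 1`, so that `f_M` is a probability measure. -/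
theorem manova_density_integrates_to_p (p q : ℝ)
    (hp : p ∈ Set.Ioo (0 : ℝ) 1) (hq : q ∈ Set.Ioo (0 : ℝ) 1)
    (hpq : p + q ≤ 1) (hple : p ≤ q) :
    ∫ x in (p + q - 2 * p * q - 2 * Real.sqrt (p * q * (1 - p) * (1 - q)))..(p +
        q - 2 * p * q + 2 * Real.sqrt (p * q * (1 - p) * (1 - q))),
      Real.sqrt ((p + q - 2 * p * q + 2 * Real.sqrt (p * q * (1 - p) * (1 - q)) - x) *
          (x - (p + q - 2 * p * q - 2 * Real.sqrt (p * q * (1 - p) * (1 - q))))) /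
        (2 * Real.pi * x * (1 - x)) = p := by
  obtain ⟨hp0, hp1⟩ := hp
  obtain ⟨hq0, hq1⟩ := hq
  set d := √(p * q * (1 - p) * (1 - q))
  have hd : d ^ 2 = p * q * (1 - p) * (1 - q) :=
    sq_sqrt (mul_nonneg (by positivity) (by linarith))
  have hd0 : 0 < d := sqrt_pos.2 (mul_pos (mul_pos (by positivity) (by linarith)) (by linarith))
  set a := p + q - 2 * p * q - 2 * d
  set b := p + q - 2 * p * q + 2 * d
  have hprod : a * b = (q - p) ^ 2 := by linear_combination (-4) * hd
  have hprod' : (1 - a) * (1 - b) = (1 - p - q) ^ 2 := by linear_combination (-4) * hd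
  have hab : a < b := by linarith
  have hsum : 0 < a + b := by nlinarith
  have hsum' : 0 < (1 - a) + (1 - b) := by nlinarith
  have ha : 0 ≤ a := by nlinarith [sq_nonneg (q - p)]
  have hb : b ≤ 1 := by nlinarith [sq_nonneg (1 - p - q)]
  rw [integral_sqrt_div_mul_one_sub ha hab hb, hprod, hprod', sqrt_sq (by linarith),
    sqrt_sq (by linarith)]
  ring
end
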